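/- arXiv:2312.03274 — 3 statements merged into one kernel-verified Lean document; each statement's English description precedes it below -/
import Mathlib

section
/- For any real matrices A (N1-by-N2) and B (N2-by-N3), the nuclear norm of the product A B equals the nuclear norm of sqrt(A^T A) sqrt(B B^T). -/
/-!
The nuclear norm `tr √(YᵀY)` is the sum of the square roots of the roots of the characteristic
polynomial of `YᵀY`. By `charpoly_mul_comm'`, `YᵀY` and `YYᵀ` have the same characteristic
polynomial up to a power of `X`, and zero roots contribute nothing, so `‖Y‖_* = tr √(YYᵀ)`.
Since `(AB)(AB)ᵀ = A T² Aᵀ = (AT)(AT)ᵀ` and `(AT)ᵀ(AT) = Tᵀ S² T = (ST)ᵀ(ST)`, this gives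
`‖AB‖_* = ‖AT‖_* = ‖ST‖_*`.
-/

open Matrix

open Classical in
/-- The unique positive semidefinite square root of a PSD matrix (junk value `0` otherwise). -/
noncomputable def msqrt {p : ℕ} (M : Matrix (Fin p) (Fin p) ℝ) : Matrix (Fin p) (Fin p) ℝ :=
  if h : M.PosSemidef then
    h.1.eigenvectorUnitary.1 * diagonal ((↑) ∘ (√·) ∘ h.1.eigenvalues) *
      (star h.1.eigenvectorUnitary : Matrix (Fin p) (Fin p) ℝ) else 0

/-- Nuclear norm: sum of singular values, i.e. trace of the PSD square root of `Aᵀ * A`. -/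
noncomputable def nuclearNorm {m n : ℕ} (A : Matrix (Fin m) (Fin n) ℝ) : ℝ :=
  (msqrt (A.transpose * A)).trace

open Polynomial

lemma trace_msqrt_eq_sum_sqrt_roots_charpoly {p : ℕ} {M : Matrix (Fin p) (Fin p) ℝ}
    (hM : M.PosSemidef) : (msqrt M).trace = (M.charpoly.roots.map Real.sqrt).sum := by
  have hU := (mem_unitaryGroup_iff').mp hM.1.eigenvectorUnitary.2
  rw [msqrt, dif_pos hM, trace_mul_cycle, hU, one_mul, trace_diagonal,
    hM.1.roots_charpoly_eq_eigenvalues, Multiset.map_map, Finset.sum_eq_multiset_sum]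
  rfl

lemma sum_sqrt_roots_X_pow_mul {q : ℝ[X]} (hq : q ≠ 0) (k : ℕ) :
    (((X ^ k * q).roots).map Real.sqrt).sum = (q.roots.map Real.sqrt).sum := by
  rw [roots_mul (mul_ne_zero (pow_ne_zero _ X_ne_zero) hq), roots_X_pow]
  simp [Multiset.nsmul_singleton]

lemma nuclearNorm_eq_trace_msqrt_mul_transpose {m n : ℕ} (Y : Matrix (Fin m) (Fin n) ℝ) :
    nuclearNorm Y = (msqrt (Y * Yᵀ)).trace := by
  have hYY := congrArg (fun q : ℝ[X] => (q.roots.map Real.sqrt).sum) (charpoly_mul_comm' Yᵀ Y)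
  simp only [Fintype.card_fin, sum_sqrt_roots_X_pow_mul (charpoly_monic _).ne_zero] at hYY
  have hYtY : (Yᵀ * Y).PosSemidef := posSemidef_conjTranspose_mul_self Y
  have hYYt : (Y * Yᵀ).PosSemidef := posSemidef_self_mul_conjTranspose Y
  rwa [nuclearNorm, trace_msqrt_eq_sum_sqrt_roots_charpoly hYtY,
    trace_msqrt_eq_sum_sqrt_roots_charpoly hYYt]

/-- `‖A * B‖_* = ‖√(Aᵀ A) * √(B Bᵀ)‖_*` where `S = √(Aᵀ A)` and `T = √(B Bᵀ)`
are the PSD square roots. -/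
theorem stmt2 {N1 N2 N3 : ℕ}
    (A : Matrix (Fin N1) (Fin N2) ℝ) (B : Matrix (Fin N2) (Fin N3) ℝ)
    (S T : Matrix (Fin N2) (Fin N2) ℝ)
    (hS : S.PosSemidef) (hSS : S * S = A.transpose * A)
    (hT : T.PosSemidef) (hTT : T * T = B * B.transpose) :
    nuclearNorm (A * B) = nuclearNorm (S * T) := by
  have hSt : Sᵀ = S := hS.1
  have hTt : Tᵀ = T := hT.1
  have hAB : (A * B) * (A * B)ᵀ = (A * T) * (A * T)ᵀ := by
    rw [transpose_mul, transpose_mul, hTt, Matrix.mul_assoc, Matrix.mul_assoc A T,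
      ← Matrix.mul_assoc B, ← Matrix.mul_assoc T, hTT]
  have hAT : (A * T)ᵀ * (A * T) = (S * T)ᵀ * (S * T) := by
    rw [transpose_mul, transpose_mul, hSt, Matrix.mul_assoc, Matrix.mul_assoc Tᵀ S,
      ← Matrix.mul_assoc Aᵀ, ← Matrix.mul_assoc S, hSS]
  calc nuclearNorm (A * B)
      = nuclearNorm (A * T) := by
        rw [nuclearNorm_eq_trace_msqrt_mul_transpose, hAB,
          ← nuclearNorm_eq_trace_msqrt_mul_transpose]
    _ = nuclearNorm (S * T) := by rw [nuclearNorm, hAT, nuclearNorm]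
end

section
/- Given a real N-by-P matrix X and a real P-by-K matrix L with K ≤ min(N,P), the minimum over all N-by-K matrices Z with orthonormal columns (Z^T Z = I_K) of the squared Frobenius norm ||X - Z L^T||_F^2 is achieved by Z = Polar.U(X L), the U factor of the polar decomposition of X L. -/
/-!
For `Z` with orthonormal columns, `‖X - Z Lᵀ‖_F² = ‖X‖_F² + ‖L‖_F² - 2 tr(Zᵀ X L)`, so it suffices
to maximize `tr(Zᵀ X L)`. Writing `X L = U D Vᵀ`, this trace is `∑ᵢ dᵢ ((Z V)ᵀ U)ᵢᵢ`; both `Z V` and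
`U` have orthonormal columns, so every diagonal entry of `(Z V)ᵀ U` is at most `1`, and `Z = U Vᵀ`
attains the bound `∑ᵢ dᵢ`.
-/

open Matrix

noncomputable def frobSq {n p : ℕ} (A : Matrix (Fin n) (Fin p) ℝ) : ℝ := ∑ i, ∑ j, (A i j)^2

section Orthonormal

variable {m n : Type*} [Fintype m] [DecidableEq n]

-- Cauchy–Schwarz for two unit columns, via `2ab ≤ a² + b²` summed over the column.
lemma transpose_mul_apply_self_le_one {A B : Matrix m n ℝ} (hA : Aᵀ * A = 1)
    (hB : Bᵀ * B = 1) (i : n) : (Aᵀ * B) i i ≤ 1 := by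
  have hcol : ∀ C : Matrix m n ℝ, Cᵀ * C = 1 → ∑ j, C j i ^ 2 = 1 := fun C hC => by
    simpa [mul_apply, sq] using congrFun (congrFun hC i) i
  have h2 : 2 * (Aᵀ * B) i i ≤ ∑ j, A j i ^ 2 + ∑ j, B j i ^ 2 := by
    rw [mul_apply, Finset.mul_sum, ← Finset.sum_add_distrib]
    refine Finset.sum_le_sum fun j _ => ?_
    simpa [mul_assoc] using two_mul_le_add_sq (A j i) (B j i)
  rw [hcol A hA, hcol B hB] at h2
  linarith

variable [Fintype n]

lemma transpose_mul_self_mul_of_orthogonal {A : Matrix m n ℝ} {V : Matrix n n ℝ}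
    (hA : Aᵀ * A = 1) (hV : Vᵀ * V = 1) : (A * V)ᵀ * (A * V) = 1 := by
  rw [transpose_mul, Matrix.mul_assoc, ← Matrix.mul_assoc Aᵀ, hA, Matrix.one_mul, hV]

lemma transpose_mul_self_mul_transpose_of_orthogonal {A : Matrix m n ℝ} {V : Matrix n n ℝ}
    (hA : Aᵀ * A = 1) (hV : V * Vᵀ = 1) : (A * Vᵀ)ᵀ * (A * Vᵀ) = 1 := by
  apply transpose_mul_self_mul_of_orthogonal hA
  rwa [transpose_transpose]

lemma trace_mul_diagonal_le_sum {M : Matrix n n ℝ} (hM : ∀ i, M i i ≤ 1) {d : n → ℝ}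
    (hd : ∀ i, 0 ≤ d i) : (M * diagonal d).trace ≤ ∑ i, d i := by
  simp only [trace, diag, mul_diagonal]
  exact Finset.sum_le_sum fun i _ => mul_le_of_le_one_left (hd i) (hM i)

variable {U W : Matrix m n ℝ} {V : Matrix n n ℝ} {d : n → ℝ}

lemma trace_transpose_mul_svd_le (hU : Uᵀ * U = 1) (hV : Vᵀ * V = 1) (hd : ∀ i, 0 ≤ d i)
    (hW : Wᵀ * W = 1) : (Wᵀ * (U * diagonal d * Vᵀ)).trace ≤ ∑ i, d i := by
  have hrot : (Wᵀ * (U * diagonal d * Vᵀ)).trace = ((W * V)ᵀ * U * diagonal d).trace := by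
    rw [transpose_mul, ← Matrix.mul_assoc, trace_mul_comm]
    simp only [Matrix.mul_assoc]
  rw [hrot]
  exact trace_mul_diagonal_le_sum
    (transpose_mul_apply_self_le_one (transpose_mul_self_mul_of_orthogonal hW hV) hU) hd

lemma trace_polar_transpose_mul_svd (hU : Uᵀ * U = 1) (hV : Vᵀ * V = 1) :
    ((U * Vᵀ)ᵀ * (U * diagonal d * Vᵀ)).trace = ∑ i, d i := by
  have hcancel : (U * Vᵀ)ᵀ * (U * diagonal d * Vᵀ) = V * diagonal d * Vᵀ := by
    simp only [transpose_mul, transpose_transpose, Matrix.mul_assoc]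
    rw [← Matrix.mul_assoc Uᵀ, hU, Matrix.one_mul]
  rw [hcancel, trace_mul_comm, ← Matrix.mul_assoc, hV, Matrix.one_mul, trace_diagonal]

end Orthonormal

lemma frobSq_eq_trace {n p : ℕ} (A : Matrix (Fin n) (Fin p) ℝ) :
    frobSq A = (Aᵀ * A).trace := by
  simp only [frobSq, trace, diag, mul_apply, transpose_apply, sq]
  rw [Finset.sum_comm]

lemma frobSq_sub_mul_transpose {N P K : ℕ} (X : Matrix (Fin N) (Fin P) ℝ)
    (L : Matrix (Fin P) (Fin K) ℝ) {Z : Matrix (Fin N) (Fin K) ℝ} (hZ : Zᵀ * Z = 1) :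
    frobSq (X - Z * Lᵀ) = (Xᵀ * X).trace + (Lᵀ * L).trace - 2 * (Zᵀ * (X * L)).trace := by
  have hcross : (Xᵀ * (Z * Lᵀ)).trace = (Zᵀ * (X * L)).trace := by
    rw [← trace_transpose, transpose_mul, transpose_mul, transpose_transpose,
      transpose_transpose, Matrix.mul_assoc, trace_mul_comm, Matrix.mul_assoc]
  have hquad : ((Z * Lᵀ)ᵀ * (Z * Lᵀ)).trace = (Lᵀ * L).trace := by
    rw [transpose_mul, transpose_transpose, Matrix.mul_assoc, ← Matrix.mul_assoc Zᵀ, hZ,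
      Matrix.one_mul, trace_mul_comm]
  rw [frobSq_eq_trace, transpose_sub, Matrix.sub_mul, Matrix.mul_sub, Matrix.mul_sub,
    trace_sub, trace_sub, trace_sub, hquad, hcross, ← trace_transpose ((Z * Lᵀ)ᵀ * X), transpose_mul,
    transpose_transpose, hcross]
  ring

theorem stmt3_general {N P K : ℕ}
    (X : Matrix (Fin N) (Fin P) ℝ) (L : Matrix (Fin P) (Fin K) ℝ)
    (U : Matrix (Fin N) (Fin K) ℝ) (V : Matrix (Fin K) (Fin K) ℝ)
    (d : Fin K → ℝ)
    (hU : U.transpose * U = 1)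
    (hV : V.transpose * V = 1) (hV' : V * V.transpose = 1)
    (hd : ∀ i, 0 ≤ d i)
    (hSVD : X * L = U * Matrix.diagonal d * V.transpose) :
    ((U * V.transpose).transpose * (U * V.transpose) = 1) ∧
    (∀ Z : Matrix (Fin N) (Fin K) ℝ, Z.transpose * Z = 1 →
      frobSq (X - (U * V.transpose) * L.transpose) ≤ frobSq (X - Z * L.transpose)) := by
  have hpolar := transpose_mul_self_mul_transpose_of_orthogonal hU hV'
  refine ⟨hpolar, fun Z hZ => ?_⟩
  rw [frobSq_sub_mul_transpose X L hpolar, frobSq_sub_mul_transpose X L hZ, hSVD,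
    trace_polar_transpose_mul_svd hU hV]
  linarith [trace_transpose_mul_svd_le hU hV hd hZ]

/-- Reduced-rank Procrustes: with `X * L = U * diagonal d * Vᵀ` an SVD, the matrix
`Z = U * Vᵀ` (the U factor of the polar decomposition of `X * L`) has orthonormal
columns and minimizes `‖X - Z Lᵀ‖_F²` over all `Z` with orthonormal columns. -/
theorem stmt3 {N P K : ℕ} (hKN : K ≤ N) (hKP : K ≤ P)
    (X : Matrix (Fin N) (Fin P) ℝ) (L : Matrix (Fin P) (Fin K) ℝ)
    (U : Matrix (Fin N) (Fin K) ℝ) (V : Matrix (Fin K) (Fin K) ℝ)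
    (d : Fin K → ℝ)
    (hU : U.transpose * U = 1)
    (hV : V.transpose * V = 1) (hV' : V * V.transpose = 1)
    (hd : ∀ i, 0 ≤ d i)
    (hSVD : X * L = U * Matrix.diagonal d * V.transpose) :
    ((U * V.transpose).transpose * (U * V.transpose) = 1) ∧
    (∀ Z : Matrix (Fin N) (Fin K) ℝ, Z.transpose * Z = 1 →
      frobSq (X - (U * V.transpose) * L.transpose) ≤ frobSq (X - Z * L.transpose)) :=
  stmt3_general X L U V d hU hV hV' hd hSVD
end

section
/- For any real number a and λ > 0 with |a| ≠ sqrt(2λ), the hard thresholding value S_0(a;λ') := a·1(|a| > λ') with λ' = sqrt(2λ) is a minimizer over l ∈ ℝ of (1/2)(l - a)^2 + λ·1(l ≠ 0). -/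
/-!
For `l ≠ 0` the objective is at least `λ`, with equality at `l = a`, while at `l = 0` it is
`a² / 2`; so its infimum is `min (a² / 2) λ`. Hard thresholding at `√(2λ)` keeps `a` exactly
when `2λ < a²`, i.e. it always picks the better of the two candidates `0` and `a`.
-/

noncomputable section

def l0Objective (lam a l : ℝ) : ℝ := 1 / 2 * (l - a) ^ 2 + if l = 0 then 0 else lam

def hardThreshold (t a : ℝ) : ℝ := if t < |a| then a else 0

end

lemma l0Objective_zero (lam a : ℝ) : l0Objective lam a 0 = a ^ 2 / 2 := by
  simp only [l0Objective, if_true, add_zero]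
  ring

lemma l0Objective_self (lam : ℝ) {a : ℝ} (ha : a ≠ 0) : l0Objective lam a a = lam := by
  simp [l0Objective, ha]

lemma min_le_l0Objective (lam a l : ℝ) : min (a ^ 2 / 2) lam ≤ l0Objective lam a l := by
  by_cases hl : l = 0
  · rw [hl, l0Objective_zero]
    exact min_le_left _ _
  · simp only [l0Objective, if_neg hl]
    nlinarith [min_le_right (a ^ 2 / 2) lam, sq_nonneg (l - a)]

lemma sqrt_lt_abs_iff {x : ℝ} (hx : 0 ≤ x) (a : ℝ) : √x < |a| ↔ x < a ^ 2 := by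
  rw [← Real.sqrt_sq_eq_abs, Real.sqrt_lt_sqrt_iff hx]

theorem l0Objective_hardThreshold {lam : ℝ} (hlam : 0 ≤ lam) (a : ℝ) :
    l0Objective lam a (hardThreshold √(2 * lam) a) = min (a ^ 2 / 2) lam := by
  unfold hardThreshold
  split_ifs with h
  · rw [sqrt_lt_abs_iff (by positivity)] at h
    have ha : a ≠ 0 := by
      rintro rfl
      linarith
    rw [l0Objective_self lam ha, min_eq_right (by linarith)]
  · rw [sqrt_lt_abs_iff (by positivity), not_lt] at h
    rw [l0Objective_zero, min_eq_left (by linarith)]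

theorem l0Objective_hardThreshold_le {lam : ℝ} (hlam : 0 ≤ lam) (a l : ℝ) :
    l0Objective lam a (hardThreshold √(2 * lam) a) ≤ l0Objective lam a l :=
  (l0Objective_hardThreshold hlam a).trans_le (min_le_l0Objective lam a l)

theorem stmt7_general (a lam : ℝ) (hlam : 0 < lam) :
    ∀ l : ℝ,
      (1/2) * ((if Real.sqrt (2 * lam) < |a| then a else 0) - a)^2
          + (if (if Real.sqrt (2 * lam) < |a| then a else 0) = 0 then 0 else lam)
        ≤ (1/2) * (l - a)^2 + (if l = 0 then 0 else lam) :=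
  l0Objective_hardThreshold_le hlam.le a

/-- Hard thresholding at `√(2λ)` minimizes the L0-penalized objective
`(1/2)(l - a)² + λ·1(l ≠ 0)`, provided `|a| ≠ √(2λ)`. -/
theorem stmt7 (a lam : ℝ) (hlam : 0 < lam) (ha : |a| ≠ Real.sqrt (2 * lam)) :
    ∀ l : ℝ,
      (1/2) * ((if Real.sqrt (2 * lam) < |a| then a else 0) - a)^2
          + (if (if Real.sqrt (2 * lam) < |a| then a else 0) = 0 then 0 else lam)
        ≤ (1/2) * (l - a)^2 + (if l = 0 then 0 else lam) :=
  stmt7_general a lam hlam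
end
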